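/- Suppose there exists an $(m, 3, 2, 1)$-design (Steiner triple system) on $m$ vertices, and let $n \geq m$ with $n - m$ even. Then there exists an $n$-vertex 3-uniform hypergraph with exactly $\frac{m(m-1)}{6} + \frac{m(n-m)}{2}$ hyperedges containing no copy of $\mathcal{S}^3(P_3 \cup K_2)$. -/

import Mathlib

open Finset

/-- The hypergraph with edge set `E` contains a copy of the hypergraph with edge set `E'`. -/
def HasCopy {V W : Type*} [DecidableEq V] (E : Set (Finset V)) (E' : Set (Finset W)) : Prop :=
  ∃ f : W → V, Function.Injective f ∧ ∀ e ∈ E', e.image f ∈ E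

/-- The `r`-uniform suspension `S^r F` of a graph `F`: add `r-2` new common vertices
to every edge of `F`. -/
def suspEdges {α : Type*} [DecidableEq α] (F : SimpleGraph α) (r : ℕ) :
    Set (Finset (α ⊕ Fin (r - 2))) :=
  { s | ∃ a b, F.Adj a b ∧
      s = ({Sum.inl a, Sum.inl b} : Finset (α ⊕ Fin (r - 2))) ∪ Finset.univ.image Sum.inr }

/-- The graph `G` contains a copy of the graph `F`. -/
def ContainsGraph {α β : Type*} (G : SimpleGraph α) (F : SimpleGraph β) : Prop :=
  ∃ f : β → α, Function.Injective f ∧ ∀ a b, F.Adj a b → G.Adj (f a) (f b)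

/-- The link graph of a set `S` of vertices in the hypergraph `E`, on the vertex set `V \ S`:
`u ~ w` iff `S ∪ {u,w}` is a hyperedge. -/
def linkGraph {V : Type*} [DecidableEq V] (E : Set (Finset V)) (S : Finset V) :
    SimpleGraph {v : V // v ∉ S} where
  Adj u w := u ≠ w ∧ S ∪ {(u : V), (w : V)} ∈ E
  symm := by
    refine ⟨fun u w h => ?_⟩
    refine ⟨h.1.symm, ?_⟩
    have h2 := h.2
    rwa [Finset.pair_comm (u : V) (w : V)] at h2
  loopless := ⟨fun u h => h.1 rfl⟩

/-- The link graph of a vertex `v` in a 3-uniform hypergraph `E`: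
`u ~ w` iff `{v,u,w}` is a hyperedge. -/
def vlink {V : Type*} [DecidableEq V] (E : Set (Finset V)) (v : V) : SimpleGraph V where
  Adj u w := u ≠ w ∧ ({v, u, w} : Finset V) ∈ E
  symm := by
    refine ⟨fun u w h => ?_⟩
    refine ⟨h.1.symm, ?_⟩
    have h2 := h.2
    rwa [Finset.pair_comm u w] at h2
  loopless := ⟨fun u h => h.1 rfl⟩

/-- A graph is a matching: any two edges sharing a vertex coincide. -/
def IsMatchingGraph {V : Type*} (G : SimpleGraph V) : Prop :=
  ∀ ⦃a b c : V⦄, G.Adj a b → G.Adj a c → b = c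

/-- The graph `P₃ ∪ K₂`: a path 0-1-2 plus a disjoint edge 3-4. -/
def P3K2 : SimpleGraph (Fin 5) :=
  SimpleGraph.fromRel fun x y => (x = 0 ∧ y = 1) ∨ (x = 1 ∧ y = 2) ∨ (x = 3 ∧ y = 4)

/-- `E'` is a subhypergraph of some blowup of `E`: there is a map of vertices carrying every
edge of `E'` (injectively, by uniformity) onto an edge of `E`. -/
def SubBlowup {W V : Type*} [DecidableEq V] (E' : Set (Finset W)) (E : Set (Finset V)) : Prop :=
  ∃ g : W → V, ∀ e ∈ E', e.image g ∈ E

/-- The number of (labelled) copies of the hypergraph `E'` in the hypergraph `E`. -/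
noncomputable def copyCount {W V : Type*} [DecidableEq V]
    (E' : Set (Finset W)) (E : Set (Finset V)) : ℕ :=
  Nat.card {f : W → V // Function.Injective f ∧ ∀ e ∈ E', e.image f ∈ E}

/-- The Turán number `ex_r(n, F)`: the maximum number of hyperedges in an `n`-vertex
`r`-uniform hypergraph containing no copy of `F`. -/
noncomputable def exTuran (n r : ℕ) {W : Type*} (F : Set (Finset W)) : ℕ :=
  sSup { m | ∃ E : Finset (Finset (Fin n)),
      (∀ e ∈ E, e.card = r) ∧ ¬ HasCopy (↑E : Set (Finset (Fin n))) F ∧ E.card = m }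

/-- The graph `H(t)`: two disjoint copies of `K_{t,t}` (parts 0,1 and 2,3) and a triangle;
the triangle vertex `i` (for `i = 0,1,2`) is completely joined to part `i`. -/
def Hgraph (t : ℕ) : SimpleGraph (Fin 4 × Fin t ⊕ Fin 3) :=
  SimpleGraph.fromRel fun x y =>
    match x, y with
    | Sum.inl (p, _), Sum.inl (q, _) => (p = 0 ∧ q = 1) ∨ (p = 2 ∧ q = 3)
    | Sum.inr i, Sum.inl (q, _) => (q : ℕ) = (i : ℕ)
    | Sum.inr _, Sum.inr _ => True
    | _, _ => False

/-- The graph `Q(t)`: independent sets `U_0,…,U_3` of size `t` and a triangle `v_0v_1v_2`;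
for `i ≤ 2`, the vertex `v_i` and every vertex of `U_3` are joined to every vertex of `U_i`. -/
def Qgraph (t : ℕ) : SimpleGraph (Fin 4 × Fin t ⊕ Fin 3) :=
  SimpleGraph.fromRel fun x y =>
    match x, y with
    | Sum.inl (p, _), Sum.inl (q, _) => p = 3 ∧ q ≠ 3
    | Sum.inr i, Sum.inl (q, _) => (q : ℕ) = (i : ℕ)
    | Sum.inr _, Sum.inr _ => True
    | _, _ => False

/-- Auxiliary triple. -/
def tri3 (n a b c : ℕ) (ha : a < n) (hb : b < n) (hc : c < n) : Finset (Fin n) :=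
  {⟨a, ha⟩, ⟨b, hb⟩, ⟨c, hc⟩}

lemma mem_tri3 {n a b c : ℕ} {ha : a < n} {hb : b < n} {hc : c < n} {y : Fin n} :
    y ∈ tri3 n a b c ha hb hc ↔ (y : ℕ) = a ∨ (y : ℕ) = b ∨ (y : ℕ) = c := by
  simp [tri3, Fin.ext_iff]

lemma card_tri3 {n a b c : ℕ} {ha : a < n} {hb : b < n} {hc : c < n}
    (hab : a ≠ b) (hac : a ≠ c) (hbc : b ≠ c) : (tri3 n a b c ha hb hc).card = 3 := by
  rw [tri3, Finset.card_insert_of_notMem, Finset.card_insert_of_notMem, Finset.card_singleton]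
  · simp [Fin.ext_iff, hbc]
  · simp [Fin.ext_iff, hab, hac]

lemma six_mul_design_card {m : ℕ} (D : Finset (Finset (Fin m)))
    (hD3 : ∀ b ∈ D, b.card = 3)
    (hDu : ∀ p : Finset (Fin m), p.card = 2 → ∃! b, b ∈ D ∧ p ⊆ b) :
    6 * D.card = m * (m - 1) := by
  have hbu : Finset.powersetCard 2 (Finset.univ : Finset (Fin m))
      = D.biUnion (fun b => Finset.powersetCard 2 b) := by
    apply Finset.ext
    intro p
    simp only [Finset.mem_powersetCard, Finset.mem_biUnion]
    constructor
    · rintro ⟨-, hp2⟩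
      obtain ⟨b, ⟨hbD, hpb⟩, -⟩ := hDu p hp2
      exact ⟨b, hbD, hpb, hp2⟩
    · rintro ⟨b, -, -, hp2⟩
      exact ⟨Finset.subset_univ p, hp2⟩
  have hcard : (Finset.powersetCard 2 (Finset.univ : Finset (Fin m))).card = 3 * D.card := by
    rw [hbu, Finset.card_biUnion]
    · rw [Finset.sum_congr rfl (fun b hb => by
        rw [Finset.card_powersetCard, hD3 b hb]), Finset.sum_const, smul_eq_mul, mul_comm]
      norm_num
    · intro b1 hb1 b2 hb2 hne
      simp only [Function.onFun]; rw [Finset.disjoint_left]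
      intro p hp1 hp2
      rw [Finset.mem_powersetCard] at hp1 hp2
      exact hne ((hDu p hp1.2).unique ⟨hb1, hp1.1⟩ ⟨hb2, hp2.1⟩)
  rw [Finset.card_powersetCard, Finset.card_univ, Fintype.card_fin,
    Nat.choose_two_right] at hcard
  have he : Even (m * (m - 1)) := by
    rcases Nat.even_or_odd m with h | h
    · exact h.mul_right _
    · rcases m with _ | s
      · simp
      · simpa [Nat.mul_comm] using (Nat.Odd.sub_odd h odd_one).mul_left (s + 1)
  obtain ⟨r, hr⟩ := he
  omega

/-- if a Steiner triple system on `m` vertices exists and `n ≥ m` with `n - m`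
even, then there is an `n`-vertex 3-uniform `S³(P₃ ∪ K₂)`-free hypergraph with exactly
`m(m-1)/6 + m(n-m)/2` hyperedges (stated multiplied by 6). -/
theorem stmt11 (n m : ℕ) (hmn : m ≤ n) (heven : Even (n - m))
    (hdesign : ∃ D : Finset (Finset (Fin m)), (∀ b ∈ D, b.card = 3) ∧
      ∀ p : Finset (Fin m), p.card = 2 → ∃! b, b ∈ D ∧ p ⊆ b) :
    ∃ E : Finset (Finset (Fin n)), (∀ e ∈ E, e.card = 3) ∧
      ¬ HasCopy (↑E : Set (Finset (Fin n))) (suspEdges P3K2 3) ∧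
      6 * E.card = m * (m - 1) + 3 * m * (n - m) := by
  classical
  obtain ⟨D, hD3, hDu⟩ := hdesign
  obtain ⟨k, hk⟩ : ∃ k, n = m + 2 * k := by
    obtain ⟨r, hr⟩ := heven; exact ⟨r, by omega⟩
  set c : Fin m → Fin n := Fin.castLE hmn with hc
  set E1 : Finset (Finset (Fin n)) := D.image (fun b => b.image c) with hE1
  set E2 : Finset (Finset (Fin n)) :=
    (Finset.univ : Finset (Fin k × Fin m)).image
      (fun q => tri3 n (m + 2 * q.1.1) (m + 2 * q.1.1 + 1) q.2.1
        (by have := q.1.isLt; omega) (by have := q.1.isLt; omega)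
        (by have := q.2.isLt; omega)) with hE2
  refine ⟨E1 ∪ E2, ?_, ?_, ?_⟩
  · -- uniformity
    intro e he
    rcases Finset.mem_union.mp he with h | h
    · obtain ⟨b, hb, rfl⟩ := Finset.mem_image.mp h
      rw [Finset.card_image_of_injective _ (Fin.castLE_injective hmn)]
      exact hD3 b hb
    · obtain ⟨q, -, rfl⟩ := Finset.mem_image.mp h
      exact card_tri3 (by omega) (by have := q.2.isLt; omega) (by have := q.2.isLt; omega)
  · -- freeness
    rintro ⟨f, hinj, hcopy⟩
    set x : Fin n := f (Sum.inr 0) with hxdef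
    set v : Fin 5 → Fin n := fun i => f (Sum.inl i) with hvdef
    have hvne : ∀ i j : Fin 5, i ≠ j → ((v i : ℕ) ≠ (v j : ℕ)) := by
      intro i j hij h
      exact hij (Sum.inl.inj (hinj (Fin.val_injective h)))
    have hvx : ∀ i : Fin 5, (v i : ℕ) ≠ (x : ℕ) := by
      intro i h
      have := hinj (Fin.val_injective h)
      simp at this
    have hT : ∀ a b : Fin 5, P3K2.Adj a b →
        ({v a, v b, x} : Finset (Fin n)) ∈ E1 ∪ E2 := by
      intro a b hab
      have hmem := hcopy _ ⟨a, b, hab, rfl⟩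
      rw [Finset.mem_coe] at hmem
      have himg : (({Sum.inl a, Sum.inl b} : Finset (Fin 5 ⊕ Fin (3-2))) ∪
          Finset.univ.image Sum.inr).image f = {v a, v b, x} := by
        have hu : (Finset.univ : Finset (Fin (3-2))) = {0} := rfl
        rw [hu]
        ext y
        simp [hvdef, hxdef, or_assoc, eq_comm]
      rwa [himg] at hmem
    have hadj01 : P3K2.Adj 0 1 := ⟨by decide, Or.inl (Or.inl ⟨rfl, rfl⟩)⟩
    have hadj12 : P3K2.Adj 1 2 := ⟨by decide, Or.inl (Or.inr (Or.inl ⟨rfl, rfl⟩))⟩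
    have hadj34 : P3K2.Adj 3 4 := ⟨by decide, Or.inl (Or.inr (Or.inr ⟨rfl, rfl⟩))⟩
    have hT1 := hT 0 1 hadj01
    have hT2 := hT 1 2 hadj12
    have hT3 := hT 3 4 hadj34
    have hE1elem : ∀ b ∈ D, ∀ y : Fin n, y ∈ b.image c → (y : ℕ) < m := by
      intro b hb y hy
      obtain ⟨a, -, rfl⟩ := Finset.mem_image.mp hy
      simp only [hc, Fin.coe_castLE]
      exact a.isLt
    have hE2char : ∀ T ∈ E2, ∃ j w : ℕ, j < k ∧ w < m ∧ ∀ y : Fin n,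
        y ∈ T ↔ ((y : ℕ) = m + 2*j ∨ (y : ℕ) = m + 2*j + 1 ∨ (y : ℕ) = w) := by
      intro T hT'
      obtain ⟨q, -, rfl⟩ := Finset.mem_image.mp hT'
      exact ⟨q.1.1, q.2.1, q.1.isLt, q.2.isLt, fun y => mem_tri3⟩
    have hblock : ∀ b1 ∈ D, ∀ b2 ∈ D, ∀ p q : Fin n, p ≠ q →
        p ∈ b1.image c → q ∈ b1.image c → p ∈ b2.image c → q ∈ b2.image c →
        b1 = b2 := by
      intro b1 hb1 b2 hb2 p q hpq hp1 hq1 hp2 hq2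
      obtain ⟨p1, hp1m, hp1e⟩ := Finset.mem_image.mp hp1
      obtain ⟨q1, hq1m, hq1e⟩ := Finset.mem_image.mp hq1
      obtain ⟨p2, hp2m, hp2e⟩ := Finset.mem_image.mp hp2
      obtain ⟨q2, hq2m, hq2e⟩ := Finset.mem_image.mp hq2
      have hp : p2 = p1 := Fin.castLE_injective hmn (by rw [← hc, hp2e, hp1e])
      have hq : q2 = q1 := Fin.castLE_injective hmn (by rw [← hc, hq2e, hq1e])
      have hne : p1 ≠ q1 := by
        intro h; apply hpq; rw [← hp1e, ← hq1e, h]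
      have hpair : ({p1, q1} : Finset (Fin m)).card = 2 := by
        rw [Finset.card_insert_of_notMem (by simpa using hne), Finset.card_singleton]
      refine (hDu _ hpair).unique ⟨hb1, ?_⟩ ⟨hb2, ?_⟩ <;>
        · intro z hz
          rcases Finset.mem_insert.mp hz with rfl | hz'
          · first
              | exact hp1m
              | exact hp ▸ hp2m
          · rw [Finset.mem_singleton] at hz'
            subst hz'
            first
              | exact hq1m
              | exact hq ▸ hq2m
    by_cases hx : (x : ℕ) < m
    · rcases Finset.mem_union.mp hT1 with h1 | h1 <;>
        rcases Finset.mem_union.mp hT2 with h2 | h2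
      · obtain ⟨b1, hb1, he1⟩ := Finset.mem_image.mp h1
        obtain ⟨b2, hb2, he2⟩ := Finset.mem_image.mp h2
        have hbb := hblock b1 hb1 b2 hb2 (v 1) x
          (fun h => hvx 1 (congrArg Fin.val h))
          (by rw [he1]; simp) (by rw [he1]; simp) (by rw [he2]; simp) (by rw [he2]; simp)
        have heq : ({v 0, v 1, x} : Finset (Fin n)) = {v 1, v 2, x} := by
          rw [← he1, hbb, he2]
        have h0 : v 0 ∈ ({v 1, v 2, x} : Finset (Fin n)) := by rw [← heq]; simp
        simp only [Finset.mem_insert, Finset.mem_singleton] at h0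
        rcases h0 with h | h | h
        · exact hvne 0 1 (by decide) (congrArg Fin.val h)
        · exact hvne 0 2 (by decide) (congrArg Fin.val h)
        · exact hvx 0 (congrArg Fin.val h)
      · obtain ⟨b1, hb1, he1⟩ := Finset.mem_image.mp h1
        obtain ⟨j, w, hj, hw, hch⟩ := hE2char _ h2
        have hv1 : (v 1 : ℕ) < m := hE1elem b1 hb1 _ (by rw [he1]; simp)
        have h1' := (hch (v 1)).mp (by simp)
        have hx' := (hch x).mp (by simp)
        have := hvx 1
        omega
      · obtain ⟨b2, hb2, he2⟩ := Finset.mem_image.mp h2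
        obtain ⟨j, w, hj, hw, hch⟩ := hE2char _ h1
        have hv1 : (v 1 : ℕ) < m := hE1elem b2 hb2 _ (by rw [he2]; simp)
        have h1' := (hch (v 1)).mp (by simp)
        have hx' := (hch x).mp (by simp)
        have := hvx 1
        omega
      · obtain ⟨j, w, hj, hw, hch1⟩ := hE2char _ h1
        obtain ⟨j', w', hj', hw', hch2⟩ := hE2char _ h2
        have a0 := (hch1 (v 0)).mp (by simp)
        have a1 := (hch1 (v 1)).mp (by simp)
        have ax := (hch1 x).mp (by simp)
        have b1' := (hch2 (v 1)).mp (by simp)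
        have b2' := (hch2 (v 2)).mp (by simp)
        have bx := (hch2 x).mp (by simp)
        have e01 := hvne 0 1 (by decide)
        have e02 := hvne 0 2 (by decide)
        have e12 := hvne 1 2 (by decide)
        have e0x := hvx 0
        have e1x := hvx 1
        have e2x := hvx 2
        omega
    · have hT1' : ({v 0, v 1, x} : Finset (Fin n)) ∈ E2 := by
        rcases Finset.mem_union.mp hT1 with h | h
        · obtain ⟨b, hb, he⟩ := Finset.mem_image.mp h
          exact absurd (hE1elem b hb x (by rw [he]; simp)) hx
        · exact h
      have hT3' : ({v 3, v 4, x} : Finset (Fin n)) ∈ E2 := by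
        rcases Finset.mem_union.mp hT3 with h | h
        · obtain ⟨b, hb, he⟩ := Finset.mem_image.mp h
          exact absurd (hE1elem b hb x (by rw [he]; simp)) hx
        · exact h
      obtain ⟨j, w, hj, hw, hch1⟩ := hE2char _ hT1'
      obtain ⟨j', w', hj', hw', hch2⟩ := hE2char _ hT3'
      have a0 := (hch1 (v 0)).mp (by simp)
      have a1 := (hch1 (v 1)).mp (by simp)
      have ax := (hch1 x).mp (by simp)
      have b3 := (hch2 (v 3)).mp (by simp)
      have b4 := (hch2 (v 4)).mp (by simp)
      have bx := (hch2 x).mp (by simp)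
      have e01 := hvne 0 1 (by decide)
      have e34 := hvne 3 4 (by decide)
      have e03 := hvne 0 3 (by decide)
      have e04 := hvne 0 4 (by decide)
      have e13 := hvne 1 3 (by decide)
      have e14 := hvne 1 4 (by decide)
      have e0x := hvx 0
      have e1x := hvx 1
      have e3x := hvx 3
      have e4x := hvx 4
      omega
  · -- cardinality
    have hdisj : Disjoint E1 E2 := by
      rw [Finset.disjoint_left]
      intro T hT1 hT2
      obtain ⟨b, hb, he⟩ := Finset.mem_image.mp hT1
      obtain ⟨q, -, heq⟩ := Finset.mem_image.mp hT2
      have hmem : (⟨m + 2 * q.1.1, by have := q.1.isLt; omega⟩ : Fin n) ∈ b.image c := by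
        rw [he, ← heq]
        exact mem_tri3.mpr (Or.inl rfl)
      obtain ⟨a, -, ha⟩ := Finset.mem_image.mp hmem
      have hv := congrArg Fin.val ha
      simp only [hc, Fin.coe_castLE] at hv
      have := a.isLt
      omega
    have hinj2 : Function.Injective (fun q : Fin k × Fin m =>
        tri3 n (m + 2 * q.1.1) (m + 2 * q.1.1 + 1) q.2.1
          (by have := q.1.isLt; omega) (by have := q.1.isLt; omega)
          (by have := q.2.isLt; omega)) := by
      rintro ⟨⟨j, hj⟩, ⟨w, hw⟩⟩ ⟨⟨j', hj'⟩, ⟨w', hw'⟩⟩ h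
      simp only at h
      have hy := fun y => Finset.ext_iff.mp h y
      simp only [mem_tri3] at hy
      have h1 := (hy ⟨m + 2 * j, by omega⟩).mp (Or.inl rfl)
      have h2 := (hy ⟨w, by omega⟩).mp (Or.inr (Or.inr rfl))
      simp only [Prod.mk.injEq, Fin.mk.injEq]
      simp only at h1 h2
      omega
    rw [Finset.card_union_of_disjoint hdisj,
      Finset.card_image_of_injective _ (Finset.image_injective (Fin.castLE_injective hmn)),
      Finset.card_image_of_injective _ hinj2, Finset.card_univ, Fintype.card_prod,
      Fintype.card_fin, Fintype.card_fin]
    have h6 := six_mul_design_card D hD3 hDu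
    have hnm : n - m = 2 * k := by omega
    rw [hnm, Nat.mul_add, h6]
    congr 1
    ring
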